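/- For any right congruence ρ on A^{-ω}: Λ'_ρ (the set of longest common suffixes lcs(x,y) over pairs (x,y) ∈ ρ with x ≠ y) is a right ideal of A*, and A*Λ'_ρ is a two-sided ideal of A* which equals A*Λ_ρ, where Λ_ρ is the set of longest common suffixes of nonsingular ρ-classes. -/

import Mathlib

/- Left infinite words over A are modelled as functions ℕ → A, where index 0 is
   the rightmost letter.  Appending a finite word on the right: -/

def lapp {A : Type*} (x : ℕ → A) (u : List A) : ℕ → A := fun n =>
  if h : n < u.length then u.reverse[n]'(by simpa using h) else x (n - u.length)

/-- u ∈ A* is a suffix of the left infinite word x -/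
def IsLSuffix {A : Type*} (u : List A) (x : ℕ → A) : Prop := ∃ y : ℕ → A, x = lapp y u

/-- right congruence on A^{-ω}: an equivalence relation compatible with the
  right action of A* (equivalently, with appending each letter) -/
def IsRightCongruence {A : Type*} (ρ : (ℕ → A) → (ℕ → A) → Prop) : Prop :=
  Equivalence ρ ∧ ∀ x y : ℕ → A, ∀ a : A, ρ x y → ρ (lapp x [a]) (lapp y [a])

section Graphs

variable {A Q : Type*}

/-- a left infinite path labelled x ending at q, in the A-graph with edge
  relation E (E p a q : there is an edge from p to q labelled a) -/
def HasLInfPath (E : Q → A → Q → Prop) (x : ℕ → A) (q : Q) : Prop :=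
  ∃ f : ℕ → Q, f 0 = q ∧ ∀ n : ℕ, E (f (n + 1)) (x n) (f n)

def OmegaDeterministic (E : Q → A → Q → Prop) : Prop :=
  ∀ x : ℕ → A, ∀ q q' : Q, HasLInfPath E x q → HasLInfPath E x q' → q = q'

def OmegaComplete (E : Q → A → Q → Prop) : Prop :=
  ∀ x : ℕ → A, ∃ q : Q, HasLInfPath E x q

def OmegaTrim (E : Q → A → Q → Prop) : Prop :=
  ∀ q : Q, ∃ x : ℕ → A, HasLInfPath E x q

/-- (-ω)-reset graph -/
def OmegaReset (E : Q → A → Q → Prop) : Prop :=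
  OmegaDeterministic E ∧ OmegaComplete E ∧ OmegaTrim E

/-- finite paths: HasPath E q u q' means u labels a path from q to q' -/
def HasPath (E : Q → A → Q → Prop) : Q → List A → Q → Prop
  | q, [], q' => q = q'
  | q, a :: u, q' => ∃ p : Q, E q a p ∧ HasPath E p u q'

end Graphs

/-- the setoid on A^{-ω} given by a right congruence -/
def caySetoid {A : Type*} {ρ : (ℕ → A) → (ℕ → A) → Prop} (hρ : IsRightCongruence ρ) :
    Setoid (ℕ → A) := ⟨ρ, hρ.1⟩

/-- the edge relation of the Cayley graph Cay(ρ): edges (uρ, a, (ua)ρ) -/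
def cayE {A : Type*} {ρ : (ℕ → A) → (ℕ → A) → Prop} (hρ : IsRightCongruence ρ) :
    Quotient (caySetoid hρ) → A → Quotient (caySetoid hρ) → Prop :=
  fun c a c' => ∃ u : ℕ → A, c = Quotient.mk (caySetoid hρ) u ∧
    c' = Quotient.mk (caySetoid hρ) (lapp u [a])

/-- Λ'_ρ: the longest common suffixes lcs(x,y) of pairs (x,y) ∈ ρ with x ≠ y -/
def LambdaP {A : Type*} (ρ : (ℕ → A) → (ℕ → A) → Prop) : Set (List A) :=
  {u | ∃ x y : ℕ → A, ρ x y ∧ x ≠ y ∧ IsLSuffix u x ∧ IsLSuffix u y ∧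
    ∀ v : List A, IsLSuffix v x → IsLSuffix v y → v <:+ u}

/-- Λ_ρ: the longest common suffixes of nonsingular ρ-classes -/
def Lambda {A : Type*} (ρ : (ℕ → A) → (ℕ → A) → Prop) : Set (List A) :=
  {u | ∃ x : ℕ → A, (∃ y : ℕ → A, ρ x y ∧ y ≠ x) ∧
    (∀ z : ℕ → A, ρ x z → IsLSuffix u z) ∧
    ∀ v : List A, (∀ z : ℕ → A, ρ x z → IsLSuffix v z) → v <:+ u}

/-- A*S: the words having a suffix in S -/
def leftIdealOf {A : Type*} (S : Set (List A)) : Set (List A) :=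
  {w | ∃ v : List A, ∃ s ∈ S, w = v ++ s}

/-- Res(ρ): the reset words of the Cayley graph Cay(ρ) -/
def ResSet {A : Type*} {ρ : (ℕ → A) → (ℕ → A) → Prop} (hρ : IsRightCongruence ρ) :
    Set (List A) :=
  {w | ∀ q q' r r' : Quotient (caySetoid hρ),
    HasPath (cayE hρ) q w q' → HasPath (cayE hρ) r w r' → q' = r'}

/-!
Appending a word `w` to both words of a pair `x ≠ y` appends `w` to their longest common
suffix, so `Λ'_ρ` is a right ideal and `A*Λ'_ρ` a two-sided one. For a nonsingular class `C`
containing `x`, pick `z ∈ C` whose first disagreement with `x` is as close to the right end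
as possible: then `lcs(C) = lcs(x, z)`. Hence `Λ_ρ ⊆ Λ'_ρ`, and conversely `lcs(C)` is a
suffix of `lcs(x, y)` for every `y ∈ C`, so `A*Λ'_ρ ⊆ A*Λ_ρ`.
-/

section LongestCommonSuffix

variable {A : Type*}

@[simp] lemma lapp_nil (x : ℕ → A) : lapp x [] = x := by
  funext n
  simp [lapp]

lemma lapp_lapp (x : ℕ → A) (u v : List A) : lapp (lapp x u) v = lapp x (u ++ v) := by
  funext n
  simp only [lapp, List.reverse_append, List.length_append]
  by_cases hv : n < v.length
  · rw [dif_pos hv, dif_pos (by omega), List.getElem_append_left (by simpa using hv)]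
  · rw [dif_neg hv]
    by_cases hu : n - v.length < u.length
    · rw [dif_pos hu, dif_pos (by omega), List.getElem_append_right (by simpa using hv)]
      simp
    · rw [dif_neg hu, dif_neg (by omega), Nat.sub_sub, Nat.add_comm v.length]

lemma lapp_injective (w : List A) : Function.Injective fun x : ℕ → A => lapp x w := by
  intro x y h
  funext n
  simpa [lapp] using congrFun h (n + w.length)

lemma IsRightCongruence.lapp {ρ : (ℕ → A) → (ℕ → A) → Prop} (hρ : IsRightCongruence ρ)
    {x y : ℕ → A} (w : List A) (h : ρ x y) : ρ (lapp x w) (lapp y w) := by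
  induction w using List.reverseRecOn with
  | nil => simpa using h
  | append_singleton w a ih => simpa only [← lapp_lapp] using hρ.2 _ _ a ih

def lsuffix (x : ℕ → A) (n : ℕ) : List A := ((List.range n).map x).reverse

@[simp] lemma length_lsuffix (x : ℕ → A) (n : ℕ) : (lsuffix x n).length = n := by
  simp [lsuffix]

lemma lsuffix_eq_lsuffix_iff {x y : ℕ → A} {n : ℕ} :
    lsuffix x n = lsuffix y n ↔ ∀ i < n, x i = y i := by
  simp [lsuffix, List.map_inj_left]

lemma lsuffix_suffix_lsuffix (x : ℕ → A) {m n : ℕ} (h : m ≤ n) : lsuffix x m <:+ lsuffix x n := by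
  obtain ⟨k, rfl⟩ := Nat.exists_eq_add_of_le h
  simp only [lsuffix, List.range_add, List.map_append, List.reverse_append]
  exact List.suffix_append _ _

lemma lapp_shift_lsuffix (x : ℕ → A) (n : ℕ) : lapp (fun k => x (k + n)) (lsuffix x n) = x := by
  funext i
  by_cases hi : i < n
  · simp [lapp, lsuffix, hi]
  · simp [lapp, hi, Nat.sub_add_cancel (Nat.le_of_not_lt hi)]

lemma isLSuffix_iff {u : List A} {x : ℕ → A} : IsLSuffix u x ↔ lsuffix x u.length = u := by
  constructor
  · rintro ⟨y, rfl⟩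
    apply List.reverse_injective
    apply List.ext_getElem (by simp [lsuffix])
    intro i hi _
    have hi : i < u.length := by simpa using hi
    simp [lsuffix, lapp, hi]
  · intro h
    rw [← h]
    exact ⟨_, (lapp_shift_lsuffix x _).symm⟩

lemma isLSuffix_lsuffix (x : ℕ → A) (n : ℕ) : IsLSuffix (lsuffix x n) x := by
  rw [isLSuffix_iff, length_lsuffix]

lemma IsLSuffix.suffix_of_length_le {u v : List A} {x : ℕ → A} (hu : IsLSuffix u x)
    (hv : IsLSuffix v x) (h : v.length ≤ u.length) : v <:+ u := by
  rw [isLSuffix_iff] at hu hv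
  rw [← hu, ← hv]
  exact lsuffix_suffix_lsuffix x h

lemma IsLSuffix.apply_eq {v : List A} {x z : ℕ → A} (hx : IsLSuffix v x) (hz : IsLSuffix v z)
    {i : ℕ} (hi : i < v.length) : x i = z i := by
  rw [isLSuffix_iff] at hx hz
  exact lsuffix_eq_lsuffix_iff.mp (hx.trans hz.symm) i hi

lemma isLSuffix_append_lapp_iff {v w : List A} {x : ℕ → A} :
    IsLSuffix (v ++ w) (lapp x w) ↔ IsLSuffix v x := by
  constructor
  · rintro ⟨y, hy⟩
    rw [← lapp_lapp] at hy
    exact ⟨y, lapp_injective w hy⟩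
  · rintro ⟨y, rfl⟩
    exact ⟨y, lapp_lapp y v w⟩

def IsLcs (S : Set (ℕ → A)) (u : List A) : Prop :=
  (∀ z ∈ S, IsLSuffix u z) ∧ ∀ v : List A, (∀ z ∈ S, IsLSuffix v z) → v <:+ u

lemma IsLcs.suffix_of_subset {S T : Set (ℕ → A)} {u v : List A} (hu : IsLcs S u) (hv : IsLcs T v)
    (hTS : T ⊆ S) : u <:+ v :=
  hv.2 u fun z hz => hu.1 z (hTS hz)

lemma IsLcs.unique {S : Set (ℕ → A)} {u v : List A} (hu : IsLcs S u) (hv : IsLcs S v) :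
    u = v :=
  (hu.suffix_of_subset hv le_rfl).eq_of_length <|
    le_antisymm (hu.suffix_of_subset hv le_rfl).length_le (hv.suffix_of_subset hu le_rfl).length_le

lemma IsLcs.lapp {S : Set (ℕ → A)} {u : List A} (hu : IsLcs S u) (hS : S.Nonempty)
    (w : List A) : IsLcs ((fun x => lapp x w) '' S) (u ++ w) := by
  refine ⟨?_, fun v hv => ?_⟩
  · rintro _ ⟨z, hz, rfl⟩
    exact isLSuffix_append_lapp_iff.mpr (hu.1 z hz)
  obtain ⟨x, hx⟩ := hS
  have hvx := hv _ ⟨x, hx, rfl⟩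
  rcases le_total v.length w.length with hvw | hwv
  · exact (IsLSuffix.suffix_of_length_le ⟨x, rfl⟩ hvx hvw).trans (List.suffix_append u w)
  · obtain ⟨v', rfl⟩ := hvx.suffix_of_length_le ⟨x, rfl⟩ hwv
    refine List.suffix_append_self_iff.mpr (hu.2 v' fun z hz => ?_)
    exact isLSuffix_append_lapp_iff.mp (hv _ ⟨z, hz, rfl⟩)

lemma exists_isLcs_pair {S : Set (ℕ → A)} {x : ℕ → A} (hx : x ∈ S) (hS : ∃ z ∈ S, z ≠ x) :
    ∃ u, ∃ z ∈ S, z ≠ x ∧ IsLcs S u ∧ IsLcs {x, z} u := by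
  classical
  have hdiff : ∃ n, ∃ z ∈ S, x n ≠ z n := by
    obtain ⟨z, hz, hzx⟩ := hS
    obtain ⟨n, hn⟩ := Function.ne_iff.mp hzx
    exact ⟨n, z, hz, Ne.symm hn⟩
  let N := Nat.find hdiff
  obtain ⟨z₀, hz₀, hN⟩ := Nat.find_spec hdiff
  have hagree : ∀ z ∈ S, IsLSuffix (lsuffix x N) z := fun z hz => by
    rw [isLSuffix_iff, length_lsuffix, lsuffix_eq_lsuffix_iff]
    intro i hi
    by_contra hne
    exact Nat.find_min hdiff hi ⟨z, hz, Ne.symm hne⟩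
  have hpair : IsLcs {x, z₀} (lsuffix x N) := by
    refine ⟨fun z hz => hagree z (by rcases hz with rfl | rfl <;> assumption), fun v hv => ?_⟩
    have hvx := hv x (Set.mem_insert x _)
    refine (isLSuffix_lsuffix x N).suffix_of_length_le hvx ?_
    by_contra! hlong
    rw [length_lsuffix] at hlong
    exact hN (hvx.apply_eq (hv z₀ (Set.mem_insert_of_mem x rfl)) hlong)
  refine ⟨lsuffix x N, z₀, hz₀, fun h => hN (by rw [h]), ⟨hagree, fun v hv => ?_⟩, hpair⟩
  exact hpair.2 v fun z hz => hv z (by rcases hz with rfl | rfl <;> assumption)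

lemma mem_lambdaP_iff {ρ : (ℕ → A) → (ℕ → A) → Prop} {u : List A} :
    u ∈ LambdaP ρ ↔ ∃ x y, ρ x y ∧ x ≠ y ∧ IsLcs {x, y} u := by
  simp [LambdaP, IsLcs, and_assoc]

lemma mem_lambda_iff {ρ : (ℕ → A) → (ℕ → A) → Prop} {u : List A} :
    u ∈ Lambda ρ ↔ ∃ x, (∃ y, ρ x y ∧ y ≠ x) ∧ IsLcs {z | ρ x z} u :=
  Iff.rfl

lemma lambdaP_append_mem {ρ : (ℕ → A) → (ℕ → A) → Prop} (hρ : IsRightCongruence ρ)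
    {u : List A} (hu : u ∈ LambdaP ρ) (w : List A) : u ++ w ∈ LambdaP ρ := by
  obtain ⟨x, y, hxy, hne, hu⟩ := mem_lambdaP_iff.mp hu
  refine mem_lambdaP_iff.mpr ⟨lapp x w, lapp y w, hρ.lapp w hxy,
    (lapp_injective w).ne hne, ?_⟩
  simpa [Set.image_pair] using hu.lapp (Set.insert_nonempty x {y}) w

lemma lambda_subset_lambdaP {ρ : (ℕ → A) → (ℕ → A) → Prop} (hρ : ∀ x, ρ x x) :
    Lambda ρ ⊆ LambdaP ρ := by
  intro u hu
  obtain ⟨x, ⟨y, hxy, hyx⟩, hu⟩ := mem_lambda_iff.mp hu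
  obtain ⟨u', z, hz, hzx, hu', hpair⟩ := exists_isLcs_pair (hρ x) ⟨y, hxy, hyx⟩
  exact mem_lambdaP_iff.mpr ⟨x, z, hz, hzx.symm, hu.unique hu' ▸ hpair⟩

lemma exists_lambda_suffix_of_mem_lambdaP {ρ : (ℕ → A) → (ℕ → A) → Prop} (hρ : ∀ x, ρ x x)
    {u : List A} (hu : u ∈ LambdaP ρ) : ∃ s ∈ Lambda ρ, s <:+ u := by
  obtain ⟨x, y, hxy, hne, hu⟩ := mem_lambdaP_iff.mp hu
  obtain ⟨s, -, -, -, hs, -⟩ := exists_isLcs_pair (hρ x) ⟨y, hxy, hne.symm⟩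
  refine ⟨s, mem_lambda_iff.mpr ⟨x, ⟨y, hxy, hne.symm⟩, hs⟩, hs.suffix_of_subset hu ?_⟩
  rintro z (rfl | rfl)
  exacts [hρ z, hxy]

lemma append_mem_leftIdealOf {S : Set (List A)} (hS : ∀ u ∈ S, ∀ w, u ++ w ∈ S)
    {u : List A} (hu : u ∈ leftIdealOf S) (v w : List A) : v ++ u ++ w ∈ leftIdealOf S := by
  obtain ⟨t, s, hs, rfl⟩ := hu
  exact ⟨v ++ t, s ++ w, hS s hs w, by simp⟩

lemma leftIdealOf_eq_of_subset {S T : Set (List A)} (hST : S ⊆ T)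
    (hTS : ∀ t ∈ T, ∃ s ∈ S, s <:+ t) : leftIdealOf S = leftIdealOf T := by
  apply Set.Subset.antisymm
  · rintro _ ⟨v, s, hs, rfl⟩
    exact ⟨v, s, hST hs, rfl⟩
  · rintro _ ⟨v, t, ht, rfl⟩
    obtain ⟨s, hs, r, rfl⟩ := hTS t ht
    exact ⟨v ++ r, s, hs, by simp⟩

end LongestCommonSuffix

/-- for a right congruence ρ on A^{-ω}: Λ'_ρ is a right ideal of
  A*, A*Λ'_ρ is a two-sided ideal of A*, and A*Λ'_ρ = A*Λ_ρ. -/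
theorem lambda_ideals {A : Type*} (ρ : (ℕ → A) → (ℕ → A) → Prop)
    (hρ : IsRightCongruence ρ) :
    (∀ u ∈ LambdaP ρ, ∀ w : List A, u ++ w ∈ LambdaP ρ) ∧
    (∀ u ∈ leftIdealOf (LambdaP ρ), ∀ v w : List A, v ++ u ++ w ∈ leftIdealOf (LambdaP ρ)) ∧
    leftIdealOf (LambdaP ρ) = leftIdealOf (Lambda ρ) := by
  have hright : ∀ u ∈ LambdaP ρ, ∀ w : List A, u ++ w ∈ LambdaP ρ :=
    fun _ hu => lambdaP_append_mem hρ hu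
  exact ⟨hright, fun _ hu => append_mem_leftIdealOf hright hu,
    (leftIdealOf_eq_of_subset (lambda_subset_lambdaP hρ.1.refl)
      fun _ hu => exists_lambda_suffix_of_mem_lambdaP hρ.1.refl hu).symm⟩
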